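/- The quartic F = x₀⁴ + x₁⁴ + x₂⁴ + (x₀+x₁+x₂)⁴ + (x₀−x₁+x₂)⁴ has middle catalecticant α_{2,F} of rank exactly 5; in particular its 6×6 catalecticant determinant vanishes. -/

import Mathlib

open MvPolynomial

/-- The differential operator on `MvPolynomial σ ℂ` given by the monomial with
exponent vector `m`: the composite of `m i`-fold partial derivatives in each variable `i`. -/
noncomputable def diffOpMon {σ : Type*} [Fintype σ] [DecidableEq σ] (m : σ →₀ ℕ) :
    Module.End ℂ (MvPolynomial σ ℂ) :=
  (m.toMultiset.toList.map fun i => (pderiv i).toLinearMap).prod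

/-- `diffOp D F` is the result of applying the polynomial `D` (in the dual variables)
to `F` as a constant-coefficient differential operator (apolarity action). -/
noncomputable def diffOp {σ : Type*} [Fintype σ] [DecidableEq σ]
    (D F : MvPolynomial σ ℂ) : MvPolynomial σ ℂ :=
  ∑ m ∈ D.support, D.coeff m • diffOpMon m F

/-- The rank of the `k`-th catalecticant of `F`: the dimension of the space spanned by all
`D(∂)F` for `D` homogeneous of degree `k`. -/
noncomputable def cataRank {σ : Type*} [Fintype σ] [DecidableEq σ]
    (k : ℕ) (F : MvPolynomial σ ℂ) : ℕ :=
  Module.finrank ℂ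
    (Submodule.span ℂ ((fun D => diffOp D F) '' {D : MvPolynomial σ ℂ | D.IsHomogeneous k}))

/-!
Every second partial derivative of a sum `∑ₖ ℓₖ⁴` of fourth powers of linear forms is a
combination of the squares `ℓₖ²`, so the image of the middle catalecticant lies in their span.
For the five Clebsch forms `x₀, x₁, x₂, x₀+x₁+x₂, x₀−x₁+x₂` the six second derivatives
recover every `ℓₖ²` (e.g. `∂₀∂₀F − ∂₀∂₂F = 12 x₀²`), and the five squares are linearly
independent, so the rank is exactly 5.
-/

theorem pderiv_pderiv_comm {R σ : Type*} [CommSemiring R] (i j : σ) (f : MvPolynomial σ R) :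
    pderiv i (pderiv j f) = pderiv j (pderiv i f) := by
  classical
  induction f using MvPolynomial.induction_on' with
  | add p q hp hq => simp only [map_add, hp, hq]
  | monomial s a =>
    rcases eq_or_ne i j with rfl | hij
    · rfl
    simp only [pderiv_monomial, Finsupp.tsub_apply, Finsupp.single_eq_of_ne hij,
      Finsupp.single_eq_of_ne hij.symm, Nat.sub_zero]
    rw [tsub_right_comm]
    congr 1
    ring

section Apolarity

variable {σ : Type*} [Fintype σ] [DecidableEq σ]

theorem diffOpMon_eq_prod_of_toMultiset_eq (m : σ →₀ ℕ) (l : List σ)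
    (hl : (l : Multiset σ) = m.toMultiset) :
    diffOpMon m = (l.map fun i => (pderiv i : Derivation ℂ _ _).toLinearMap).prod := by
  have hperm : m.toMultiset.toList.Perm l := by
    rw [← Multiset.coe_eq_coe, Multiset.coe_toList, hl]
  refine (hperm.map _).prod_eq' ?_
  rw [List.pairwise_map]
  exact List.Pairwise.imp_of_mem
    (fun {i j} _ _ _ => LinearMap.ext fun f => pderiv_pderiv_comm i j f)
    (List.pairwise_of_forall fun _ _ => trivial)

theorem diffOpMon_eq_pderiv_pderiv {m : σ →₀ ℕ} {i j : σ} (hm : m.toMultiset = {i, j})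
    (F : MvPolynomial σ ℂ) : diffOpMon m F = pderiv i (pderiv j F) := by
  rw [diffOpMon_eq_prod_of_toMultiset_eq m [i, j] (by rw [hm]; rfl)]
  simp [Module.End.mul_apply]

theorem diffOp_monomial_one (m : σ →₀ ℕ) (F : MvPolynomial σ ℂ) :
    diffOp (monomial m 1) F = diffOpMon m F := by
  simp [diffOp, support_monomial]

theorem span_diffOp_isHomogeneous_two (F : MvPolynomial σ ℂ) :
    Submodule.span ℂ ((fun D => diffOp D F) '' {D | D.IsHomogeneous 2}) =
      Submodule.span ℂ (Set.range fun p : σ × σ => pderiv p.1 (pderiv p.2 F)) := by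
  apply le_antisymm
  · rw [Submodule.span_le]
    rintro _ ⟨D, hD, rfl⟩
    refine Submodule.sum_mem _ fun m hm => Submodule.smul_mem _ _ ?_
    have hdeg : m.degree = 2 := by
      rw [Finsupp.degree_eq_weight_one]
      exact hD (mem_support_iff.mp hm)
    obtain ⟨i, j, hij⟩ := Multiset.card_eq_two.mp (by rw [Finsupp.card_toMultiset]; exact hdeg)
    rw [diffOpMon_eq_pderiv_pderiv hij]
    exact Submodule.subset_span ⟨(i, j), rfl⟩
  · rw [Submodule.span_le]
    rintro _ ⟨⟨i, j⟩, rfl⟩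
    have hm : (Finsupp.single i 1 + Finsupp.single j 1).toMultiset = {i, j} := by
      simp [Finsupp.toMultiset_add, Finsupp.toMultiset_single]
    refine Submodule.subset_span ⟨monomial (Finsupp.single i 1 + Finsupp.single j 1) 1,
      isHomogeneous_monomial _ ?_, ?_⟩
    · simp only [map_add, Finsupp.degree_single]
    · simp only [diffOp_monomial_one, diffOpMon_eq_pderiv_pderiv hm]

theorem cataRank_two_eq_finrank_span_pderiv_pderiv (F : MvPolynomial σ ℂ) :
    cataRank 2 F = Module.finrank ℂ
      (Submodule.span ℂ (Set.range fun p : σ × σ => pderiv p.1 (pderiv p.2 F))) := by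
  rw [cataRank, span_diffOp_isHomogeneous_two]

end Apolarity

section LinearForms

variable {R σ : Type*} [CommSemiring R] [Fintype σ]

noncomputable def linearForm (a : σ → R) : MvPolynomial σ R :=
  ∑ i, C (a i) * X i

variable [DecidableEq σ]

theorem pderiv_linearForm (a : σ → R) (i : σ) : pderiv i (linearForm a) = C (a i) := by
  simp [linearForm, pderiv_X, Pi.single_apply]

theorem pderiv_linearForm_pow (a : σ → R) (i : σ) (n : ℕ) :
    pderiv i (linearForm a ^ (n + 1)) = C ((n + 1) * a i) * linearForm a ^ n := by
  rw [pderiv_pow, pderiv_linearForm, Nat.add_sub_cancel, C_mul, map_add, map_natCast, map_one]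
  push_cast
  ring

theorem pderiv_pderiv_linearForm_pow_four (a : σ → R) (i j : σ) :
    pderiv i (pderiv j (linearForm a ^ 4)) = (12 * a i * a j) • linearForm a ^ 2 := by
  rw [pderiv_linearForm_pow a j 3, pderiv_C_mul, pderiv_linearForm_pow a i 2, smul_eq_C_mul,
    ← mul_assoc, ← C_mul]
  congr 2
  push_cast
  ring

theorem pderiv_pderiv_sum_linearForm_pow_four {ι : Type*} [Fintype ι] (a : ι → σ → R)
    (i j : σ) :
    pderiv i (pderiv j (∑ k, linearForm (a k) ^ 4)) =
      ∑ k, (12 * a k i * a k j) • linearForm (a k) ^ 2 := by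
  simp only [map_sum, pderiv_pderiv_linearForm_pow_four]

end LinearForms

theorem span_pderiv_pderiv_sum_linearForm_pow_four_le {σ ι : Type*} [Fintype σ]
    [DecidableEq σ] [Fintype ι] (a : ι → σ → ℂ) :
    Submodule.span ℂ
        (Set.range fun p : σ × σ => pderiv p.1 (pderiv p.2 (∑ k, linearForm (a k) ^ 4))) ≤
      Submodule.span ℂ (Set.range fun k => linearForm (a k) ^ 2) := by
  rw [Submodule.span_le]
  rintro _ ⟨⟨i, j⟩, rfl⟩
  simp only [SetLike.mem_coe, pderiv_pderiv_sum_linearForm_pow_four]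
  exact Submodule.sum_mem _ fun k _ => Submodule.smul_mem _ _ (Submodule.subset_span ⟨k, rfl⟩)

def clebschForms : Fin 5 → Fin 3 → ℂ :=
  ![![1, 0, 0], ![0, 1, 0], ![0, 0, 1], ![1, 1, 1], ![1, -1, 1]]

theorem linearForm_clebschForms (k : Fin 5) :
    linearForm (clebschForms k) = ![X 0, X 1, X 2, X 0 + X 1 + X 2, X 0 - X 1 + X 2] k := by
  fin_cases k <;> simp [linearForm, clebschForms, Fin.sum_univ_three, sub_eq_add_neg]

theorem clebschQuartic_eq_sum :
    ((X 0) ^ 4 + (X 1) ^ 4 + (X 2) ^ 4 + (X 0 + X 1 + X 2) ^ 4 + (X 0 - X 1 + X 2) ^ 4 :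
        MvPolynomial (Fin 3) ℂ) = ∑ k, linearForm (clebschForms k) ^ 4 := by
  simp [linearForm_clebschForms, Fin.sum_univ_five]

theorem linearForm_clebschForms_sq_mem_span (k : Fin 5) :
    linearForm (clebschForms k) ^ 2 ∈ Submodule.span ℂ (Set.range fun p : Fin 3 × Fin 3 =>
      pderiv p.1 (pderiv p.2 (∑ k, linearForm (clebschForms k) ^ 4))) := by
  set S := Submodule.span ℂ (Set.range fun p : Fin 3 × Fin 3 =>
    pderiv p.1 (pderiv p.2 (∑ k, linearForm (clebschForms k) ^ 4)))
  have hd (i j : Fin 3) :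
      ∑ k, (12 * clebschForms k i * clebschForms k j) • linearForm (clebschForms k) ^ 2 ∈ S := by
    rw [← pderiv_pderiv_sum_linearForm_pow_four]
    exact Submodule.subset_span ⟨(i, j), rfl⟩
  have h00 := hd 0 0
  have h11 := hd 1 1
  have h22 := hd 2 2
  have h01 := hd 0 1
  have h02 := hd 0 2
  simp only [Fin.sum_univ_five, clebschForms, Matrix.cons_val, Matrix.cons_val_zero,
    Matrix.cons_val_one, mul_one, mul_zero, mul_neg, neg_neg, zero_smul, neg_smul, add_zero,
    zero_add] at h00 h11 h22 h01 h02
  fin_cases k <;>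
    simp only [clebschForms, Fin.zero_eta, Fin.mk_one, Fin.reduceFinMk, Matrix.cons_val,
      Matrix.cons_val_zero, Matrix.cons_val_one]
  · convert S.smul_mem (12⁻¹ : ℂ) (S.sub_mem h00 h02) using 1; module
  · convert S.smul_mem (12⁻¹ : ℂ) (S.sub_mem h11 h02) using 1; module
  · convert S.smul_mem (12⁻¹ : ℂ) (S.sub_mem h22 h02) using 1; module
  · convert S.smul_mem (24⁻¹ : ℂ) (S.add_mem h02 h01) using 1; module
  · convert S.smul_mem (24⁻¹ : ℂ) (S.sub_mem h02 h01) using 1; module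

theorem linearIndependent_linearForm_clebschForms_sq :
    LinearIndependent ℂ fun k => linearForm (clebschForms k) ^ 2 := by
  simp only [linearForm_clebschForms]
  rw [Fintype.linearIndependent_iff]
  intro c hc
  have h (p : Fin 3 → ℂ) := congrArg (eval p) hc
  have e1 := h ![1, 0, 0]
  have e2 := h ![0, 1, 0]
  have e3 := h ![0, 0, 1]
  have e4 := h ![1, 1, 0]
  have e5 := h ![1, -1, 0]
  have e6 := h ![1, 0, 1]
  simp only [Fin.sum_univ_five, Matrix.cons_val_zero, Matrix.cons_val_one, Matrix.cons_val,
    map_add, map_sub, map_zero, map_pow, smul_eval, eval_X] at e1 e2 e3 e4 e5 e6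
  norm_num at e1 e2 e3 e4 e5 e6
  intro k
  fin_cases k <;> simp only [Fin.zero_eta, Fin.mk_one, Fin.reduceFinMk]
  · linear_combination e1 - (e6 - e1 - e3) / 2
  · linear_combination e2 - (e6 - e1 - e3) / 2
  · linear_combination e3 - (e6 - e1 - e3) / 2
  · linear_combination (e6 - e1 - e3) / 4 + (e4 - e5) / 8
  · linear_combination (e6 - e1 - e3) / 4 - (e4 - e5) / 8

theorem span_pderiv_pderiv_clebsch_eq :
    Submodule.span ℂ (Set.range fun p : Fin 3 × Fin 3 =>
      pderiv p.1 (pderiv p.2 (∑ k, linearForm (clebschForms k) ^ 4))) =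
      Submodule.span ℂ (Set.range fun k => linearForm (clebschForms k) ^ 2) :=
  le_antisymm (span_pderiv_pderiv_sum_linearForm_pow_four_le clebschForms)
    (Submodule.span_le.mpr (Set.range_subset_iff.mpr linearForm_clebschForms_sq_mem_span))

/-- the Clebsch quartic `x₀⁴ + x₁⁴ + x₂⁴ + (x₀+x₁+x₂)⁴ + (x₀−x₁+x₂)⁴` has
middle catalecticant of rank exactly 5; in particular it does not have full rank 6. -/
theorem stmt_15 :
    cataRank 2
      ((X 0) ^ 4 + (X 1) ^ 4 + (X 2) ^ 4 + (X 0 + X 1 + X 2) ^ 4 + (X 0 - X 1 + X 2) ^ 4 :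
        MvPolynomial (Fin 3) ℂ) = 5 ∧
    cataRank 2
      ((X 0) ^ 4 + (X 1) ^ 4 + (X 2) ^ 4 + (X 0 + X 1 + X 2) ^ 4 + (X 0 - X 1 + X 2) ^ 4 :
        MvPolynomial (Fin 3) ℂ) ≠ 6 := by
  have h5 : cataRank 2
      ((X 0) ^ 4 + (X 1) ^ 4 + (X 2) ^ 4 + (X 0 + X 1 + X 2) ^ 4 + (X 0 - X 1 + X 2) ^ 4 :
        MvPolynomial (Fin 3) ℂ) = 5 := by
    rw [clebschQuartic_eq_sum, cataRank_two_eq_finrank_span_pderiv_pderiv,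
      span_pderiv_pderiv_clebsch_eq,
      finrank_span_eq_card linearIndependent_linearForm_clebschForms_sq, Fintype.card_fin]
  exact ⟨h5, by omega⟩
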